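/- arXiv:1612.02079 — 2 statements merged into one kernel-verified Lean document; each statement's English description precedes it below -/
import Mathlib

section
/- Let U be a real vector space, m ∈ ℕ, M, N ∈ ℕ, and for multi-indices ℓ ∈ ℕ^M with |ℓ| ≤ N let L_ℓ : U → U be linear. Suppose families V^n : Fin m → U and A_k ∈ ℝ^{m×m} (indexed by multi-indices with |n|, |k| ≤ N) satisfy, for every |n| ≤ N and every j, Σ_{0≤k≤n} (L_k V^{n−k})_j = Σ_{0≤k≤n} Σ_i V^{n−k}_i (A_k)_{ij}. For each |n| ≤ N define the U-valued polynomial (in ξ ∈ ℝ^M, degree ≤ N) 𝓥^n_j := Σ_{0≤k≤n} (ξ^k/k!) V^{n−k}_j. Then the operator 𝓛̃ := Σ_{|ℓ| ≤ N} L_ℓ ∂_ξ^ℓ (with L_ℓ acting coefficient-wise) satisfies, for every |n| ≤ N and every j, 𝓛̃𝓥^n_j = Σ_{0≤k≤n} Σ_i 𝓥^{n−k}_i (A_k)_{ij}; in particular the span of all components 𝓥^n_j is an 𝓛̃-invariant subspace of the space of U-valued polynomials of degree ≤ N. -/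
/-- total degree `|n| = n₁ + ⋯ + n_M` of a multi-index. -/
def mdeg {M : ℕ} (n : Fin M → ℕ) : ℕ := ∑ i, n i

/-- multi-index factorial `n! = n₁!⋯n_M!`. -/
def mfact {M : ℕ} (n : Fin M → ℕ) : ℕ := ∏ i, Nat.factorial (n i)

/-- the finite set of multi-indices in `ℕ^M` of total degree at most `d`. -/
def mIdxLe (M d : ℕ) : Finset (Fin M → ℕ) :=
  (Fintype.piFinset fun _ : Fin M => Finset.range (d + 1)).filter fun n => mdeg n ≤ d

/-- the finite set of multi-indices `k ≤ n` (componentwise). -/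
def mIic {M : ℕ} (n : Fin M → ℕ) : Finset (Fin M → ℕ) :=
  Fintype.piFinset fun i => Finset.range (n i + 1)

/-- A `U`-valued polynomial of degree ≤ N in `ξ ∈ ℝ^M` is represented by its family of
`ξ^k`-coefficients (zero beyond degree `N`).  `pder ℓ` is the formal derivative `∂_ξ^ℓ`,
sending the coefficient family `c` to the one whose `ξ^k`-coefficient is
`((k+ℓ)!/k!) c_{k+ℓ}`. -/
noncomputable def pder {M : ℕ} {U : Type*} [AddCommGroup U] [Module ℝ U]
    (ℓ : Fin M → ℕ) (c : (Fin M → ℕ) → U) : (Fin M → ℕ) → U :=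
  fun k => ((mfact (k + ℓ) : ℝ) / (mfact k : ℝ)) • c (k + ℓ)

/-- the `U`-valued polynomial of degree ≤ N whose `ξⁿ/n!`-coefficient is `u_n`, i.e. whose
`ξⁿ`-coefficient is `u_n/n!` for `|n| ≤ N` and `0` otherwise. -/
noncomputable def genPoly {M : ℕ} {U : Type*} [AddCommGroup U] [Module ℝ U]
    (N : ℕ) (u : (Fin M → ℕ) → U) : (Fin M → ℕ) → U :=
  fun n => if mdeg n ≤ N then ((mfact n : ℝ))⁻¹ • u n else 0

/-- The generating-multinomial basis vectors `𝓥^n_j = Σ_{k ≤ n} (ξ^k/k!) V^{n−k}_j`,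
as `U`-valued polynomials of degree ≤ N represented by their coefficient families. -/
noncomputable def calV {M m : ℕ} {U : Type*} [AddCommGroup U] [Module ℝ U]
    (V : (Fin M → ℕ) → Fin m → U) (n : Fin M → ℕ) (j : Fin m) : (Fin M → ℕ) → U :=
  fun k => if ∀ i, k i ≤ n i then ((mfact k : ℝ))⁻¹ • V (n - k) j else 0

/-- the operator `𝓛̃ = Σ_{|ℓ| ≤ N} L_ℓ ∂_ξ^ℓ` on `U`-valued polynomials of degree ≤ N,
with each `L_ℓ` acting coefficient-wise. -/
noncomputable def Ltilde {M : ℕ} {U : Type*} [AddCommGroup U] [Module ℝ U]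
    (N : ℕ) (L : (Fin M → ℕ) → U →ₗ[ℝ] U) (c : (Fin M → ℕ) → U) : (Fin M → ℕ) → U :=
  fun k => ∑ ℓ ∈ mIdxLe M N, L ℓ (pder ℓ c k)


lemma mfact_real_ne_zero {M : ℕ} (n : Fin M → ℕ) : (mfact n : ℝ) ≠ 0 := by
  have : 0 < mfact n := Finset.prod_pos fun i _ => Nat.factorial_pos _
  exact_mod_cast this.ne'

lemma mem_mIic_iff {M : ℕ} {n k : Fin M → ℕ} : k ∈ mIic n ↔ ∀ i, k i ≤ n i := by
  simp [mIic, Fintype.mem_piFinset, Nat.lt_succ_iff]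

lemma mdeg_mono {M : ℕ} {a b : Fin M → ℕ} (h : ∀ i, a i ≤ b i) : mdeg a ≤ mdeg b :=
  Finset.sum_le_sum fun i _ => h i

lemma Ltilde_add {M : ℕ} {U : Type*} [AddCommGroup U] [Module ℝ U]
    (N : ℕ) (L : (Fin M → ℕ) → U →ₗ[ℝ] U) (c c' : (Fin M → ℕ) → U) :
    Ltilde N L (c + c') = Ltilde N L c + Ltilde N L c' := by
  funext k
  simp [Ltilde, pder, smul_add, Finset.sum_add_distrib]

lemma Ltilde_smul {M : ℕ} {U : Type*} [AddCommGroup U] [Module ℝ U]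
    (N : ℕ) (L : (Fin M → ℕ) → U →ₗ[ℝ] U) (r : ℝ) (c : (Fin M → ℕ) → U) :
    Ltilde N L (r • c) = r • Ltilde N L c := by
  funext k
  simp [Ltilde, pder, Finset.smul_sum, smul_comm r]

lemma Ltilde_zero {M : ℕ} {U : Type*} [AddCommGroup U] [Module ℝ U]
    (N : ℕ) (L : (Fin M → ℕ) → U →ₗ[ℝ] U) :
    Ltilde N L (0 : (Fin M → ℕ) → U) = 0 := by
  funext k
  simp [Ltilde, pder]



/-- Key computation: `𝓛̃𝓥^n_j = Σ_{0 ≤ k ≤ n} Σ_i A_k i j • 𝓥^{n−k}_i` for all `|n| ≤ N`;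
in particular the span of all components `𝓥^n_j` is an `𝓛̃`-invariant subspace. -/
theorem Ltilde_calV_invariant
    {U : Type*} [AddCommGroup U] [Module ℝ U]
    (m M N : ℕ)
    (L : (Fin M → ℕ) → U →ₗ[ℝ] U)
    (V : (Fin M → ℕ) → Fin m → U)
    (A : (Fin M → ℕ) → Matrix (Fin m) (Fin m) ℝ)
    (hcompat : ∀ n : Fin M → ℕ, mdeg n ≤ N → ∀ j,
      ∑ k ∈ mIic n, L k (V (n - k) j) = ∑ k ∈ mIic n, ∑ i, A k i j • V (n - k) i) :
    (∀ n : Fin M → ℕ, mdeg n ≤ N → ∀ j,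
      Ltilde N L (calV V n j) = ∑ k ∈ mIic n, ∑ i, A k i j • calV V (n - k) i) ∧
    (∀ p ∈ Submodule.span ℝ
        {q : (Fin M → ℕ) → U | ∃ n j, mdeg n ≤ N ∧ q = calV V n j},
      Ltilde N L p ∈ Submodule.span ℝ
        {q : (Fin M → ℕ) → U | ∃ n j, mdeg n ≤ N ∧ q = calV V n j}) := by
  have key : ∀ n : Fin M → ℕ, mdeg n ≤ N → ∀ j,
      Ltilde N L (calV V n j) = ∑ k ∈ mIic n, ∑ i, A k i j • calV V (n - k) i := by
    intro n hn j
    funext x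
    have hRHS : (∑ k ∈ mIic n, ∑ i, A k i j • calV V (n - k) i) x
        = ∑ k ∈ mIic n, ∑ i, A k i j • (calV V (n - k) i x) := by
      simp [Finset.sum_apply]
    have hsub : ∀ ℓ : Fin M → ℕ, n - (x + ℓ) = n - x - ℓ := by
      intro ℓ; funext i; simp [Nat.sub_sub]
    have hterm : ∀ ℓ : Fin M → ℕ, L ℓ (pder ℓ (calV V n j) x)
        = if ∀ i, x i + ℓ i ≤ n i then ((mfact x : ℝ))⁻¹ • L ℓ (V (n - x - ℓ) j) else 0 := by
      intro ℓ
      simp only [pder, calV, Pi.add_apply]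
      by_cases hc : ∀ i, x i + ℓ i ≤ n i
      · rw [if_pos hc, if_pos hc, smul_smul, map_smul, hsub ℓ]
        congr 1
        rw [div_mul_eq_mul_div, mul_inv_cancel₀ (mfact_real_ne_zero _), one_div]
      · rw [if_neg hc, if_neg hc, smul_zero, map_zero]
    simp only [Ltilde, hterm, hRHS]
    by_cases hx : ∀ i, x i ≤ n i
    · -- LHS
      rw [← Finset.sum_filter]
      have hfil1 : (mIdxLe M N).filter (fun ℓ => ∀ i, x i + ℓ i ≤ n i) = mIic (n - x) := by
        ext ℓ
        simp only [Finset.mem_filter, mIdxLe, mem_mIic_iff, Fintype.mem_piFinset,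
          Finset.mem_range, Nat.lt_succ_iff, Pi.sub_apply]
        constructor
        · rintro ⟨_, h2⟩ i; have := h2 i; omega
        · intro h
          have hle : ∀ i, ℓ i ≤ n i := fun i => le_trans (h i) (Nat.sub_le _ _)
          have hd : mdeg ℓ ≤ N := le_trans (mdeg_mono hle) hn
          refine ⟨⟨fun i => ?_, hd⟩, fun i => ?_⟩
          · exact le_trans (le_trans (Finset.single_le_sum (f := ℓ) (fun i _ => Nat.zero_le _)
              (Finset.mem_univ i)) le_rfl) hd
          · have := h i; have := hx i; omega
      rw [hfil1]
      rw [← Finset.smul_sum, hcompat (n - x) (le_trans (mdeg_mono fun i => Nat.sub_le _ _) hn) j]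
      -- RHS
      have hfil2 : ∀ k ∈ mIic n, (∑ i, A k i j • calV V (n - k) i x)
          = if ∀ i, x i + k i ≤ n i
            then ∑ i, A k i j • (((mfact x : ℝ))⁻¹ • V (n - x - k) i) else 0 := by
        intro k hk
        rw [mem_mIic_iff] at hk
        simp only [calV, Pi.sub_apply]
        by_cases hc : ∀ i, x i + k i ≤ n i
        · have hc' : ∀ i, x i ≤ n i - k i := fun i => by have := hc i; have := hk i; omega
          have heq : n - k - x = n - x - k := by
            funext i; simp [Nat.sub_sub, Nat.add_comm]
          simp [hc, hc', heq]
        · have hc' : ¬ ∀ i, x i ≤ n i - k i := by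
            intro h; exact hc fun i => by have := h i; have := hk i; omega
          simp [hc, hc']
      rw [Finset.sum_congr rfl hfil2, ← Finset.sum_filter]
      have hfil3 : (mIic n).filter (fun k => ∀ i, x i + k i ≤ n i) = mIic (n - x) := by
        ext k
        simp only [Finset.mem_filter, mem_mIic_iff, Pi.sub_apply]
        constructor
        · rintro ⟨_, h2⟩ i; have := h2 i; have := hx i; omega
        · intro h; constructor <;> intro i <;> (have := h i; have := hx i; omega)
      rw [hfil3, Finset.smul_sum]
      refine Finset.sum_congr rfl fun k _ => ?_
      rw [Finset.smul_sum]
      exact Finset.sum_congr rfl fun i _ => smul_comm _ _ _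
    · push_neg at hx
      obtain ⟨i0, hi0⟩ := hx
      have hL : ∀ ℓ : Fin M → ℕ, ¬ ∀ i, x i + ℓ i ≤ n i := by
        intro ℓ h; have := h i0; omega
      have hR : ∀ k ∈ mIic n, ∀ i, calV V (n - k) i x = 0 := by
        intro k _ i
        simp only [calV, Pi.sub_apply]
        rw [if_neg]
        intro h; have := h i0; have : n i0 - k i0 ≤ n i0 := Nat.sub_le _ _; omega
      simp only [hL, if_false, Finset.sum_const_zero]
      refine (Finset.sum_eq_zero fun k hk => Finset.sum_eq_zero fun i _ => ?_).symm
      rw [hR k hk i, smul_zero]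
  refine ⟨key, fun p hp => ?_⟩
  set S : Set ((Fin M → ℕ) → U) := {q | ∃ n j, mdeg n ≤ N ∧ q = calV V n j}
  refine Submodule.span_induction ?_ ?_ ?_ ?_ hp
  · rintro q ⟨n, j, hn, rfl⟩
    rw [key n hn j]
    refine Submodule.sum_mem _ fun k hk => Submodule.sum_mem _ fun i _ => ?_
    refine Submodule.smul_mem _ _ (Submodule.subset_span ?_)
    exact ⟨n - k, i, le_trans (mdeg_mono fun i' => Nat.sub_le _ _) hn, rfl⟩
  · rw [Ltilde_zero]; exact Submodule.zero_mem _
  · intro a b _ _ ha hb; rw [Ltilde_add]; exact Submodule.add_mem _ ha hb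
  · intro r a _ ha; rw [Ltilde_smul]; exact Submodule.smul_mem _ _ ha
end

section
/- Let m, M, N ∈ ℕ and let A_ℓ ∈ ℝ^{m×m} be given for each multi-index ℓ ∈ ℕ^M with |ℓ| ≤ N. Suppose U_n : ℝ → ℝ^m are differentiable functions, for multi-indices |n| ≤ N, satisfying U_n′(t) = Σ_{|ℓ| ≤ N−|n|} A_ℓ U_{ℓ+n}(t) for all t and all |n| ≤ N. Define the ℝ^m-valued polynomial of degree ≤ N in ξ ∈ ℝ^M, Ũ(t), whose ξⁿ-coefficient is U_n(t)/n!. Then, as an identity of ℝ^m-valued polynomials for every t, ∂ₜŨ(t) = Σ_{|ℓ| ≤ N} A_ℓ ∂_ξ^ℓ Ũ(t). -/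
/-! The derivative `∂_ξ^ℓ` cancels the factorial `(k+ℓ)!` of the generating multinomial, so
`∂_ξ^ℓ Ũ` has `ξ^κ`-coefficient `U_{κ+ℓ}/κ!` when `|κ+ℓ| ≤ N`. Summing against `A_ℓ`, only the
`ℓ` with `|ℓ| ≤ N - |κ|` survive, which is exactly `1/κ!` times the amplitude equation for
`U_κ`. -/

section MultiIndex

variable {M : ℕ}

lemma mfact_cast_ne_zero (n : Fin M → ℕ) : (mfact n : ℝ) ≠ 0 :=
  Nat.cast_ne_zero.mpr (Finset.prod_pos fun i _ => Nat.factorial_pos (n i)).ne'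

lemma mdeg_add (a b : Fin M → ℕ) : mdeg (a + b) = mdeg a + mdeg b :=
  Finset.sum_add_distrib

lemma mem_mIdxLe {d : ℕ} {n : Fin M → ℕ} : n ∈ mIdxLe M d ↔ mdeg n ≤ d := by
  simp only [mIdxLe, Finset.mem_filter, Fintype.mem_piFinset, Finset.mem_range,
    Nat.lt_succ_iff, and_iff_right_iff_imp]
  exact fun h i => (Finset.single_le_sum (fun j _ => Nat.zero_le (n j))
    (Finset.mem_univ i)).trans h

lemma mIdxLe_filter_mdeg_add_le {N : ℕ} {κ : Fin M → ℕ} (hκ : mdeg κ ≤ N) :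
    (mIdxLe M N).filter (fun ℓ => mdeg (κ + ℓ) ≤ N) = mIdxLe M (N - mdeg κ) := by
  ext ℓ
  simp only [Finset.mem_filter, mem_mIdxLe, mdeg_add]
  omega

end MultiIndex

section GenPoly

variable {M : ℕ} {U : Type*} [AddCommGroup U] [Module ℝ U]

lemma genPoly_of_mdeg_le {N : ℕ} (u : (Fin M → ℕ) → U) {n : Fin M → ℕ} (hn : mdeg n ≤ N) :
    genPoly N u n = (mfact n : ℝ)⁻¹ • u n :=
  if_pos hn

lemma pder_genPoly (N : ℕ) (u : (Fin M → ℕ) → U) (ℓ k : Fin M → ℕ) :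
    pder ℓ (genPoly N u) k =
      (mfact k : ℝ)⁻¹ • if mdeg (k + ℓ) ≤ N then u (k + ℓ) else 0 := by
  unfold pder genPoly
  split_ifs
  · rw [smul_smul, div_mul_eq_mul_div, mul_inv_cancel₀ (mfact_cast_ne_zero _), one_div]
  · simp

end GenPoly

/-- If the amplitudes satisfy `U_n′(t) = Σ_{|ℓ| ≤ N−|n|} A_ℓ U_{ℓ+n}(t)`, then the
generating multinomial `Ũ(t)` (with `ξⁿ`-coefficient `U_n(t)/n!`) satisfies,
coefficient-wise, the `N`th-order model PDE `∂ₜŨ = Σ_{|ℓ| ≤ N} A_ℓ ∂_ξ^ℓ Ũ`. -/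
theorem genPoly_satisfies_model_pde
    (m M N : ℕ)
    (A : (Fin M → ℕ) → Matrix (Fin m) (Fin m) ℝ)
    (Uamp : (Fin M → ℕ) → ℝ → Fin m → ℝ)
    (hode : ∀ n : Fin M → ℕ, mdeg n ≤ N → ∀ t : ℝ,
      HasDerivAt (Uamp n)
        (∑ ℓ ∈ mIdxLe M (N - mdeg n), (A ℓ).mulVec (Uamp (ℓ + n) t)) t) :
    ∀ κ : Fin M → ℕ, mdeg κ ≤ N → ∀ t : ℝ,
      HasDerivAt (fun s => genPoly N (fun n => Uamp n s) κ)
        (∑ ℓ ∈ mIdxLe M N, (A ℓ).mulVec (pder ℓ (genPoly N (fun n => Uamp n t)) κ)) t := by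
  intro κ hκ t
  have hcoeff : (fun s => genPoly N (fun n => Uamp n s) κ)
      = (mfact κ : ℝ)⁻¹ • Uamp κ :=
    funext fun s => genPoly_of_mdeg_le _ hκ
  have hrhs : ∑ ℓ ∈ mIdxLe M N, (A ℓ).mulVec (pder ℓ (genPoly N (fun n => Uamp n t)) κ)
      = (mfact κ : ℝ)⁻¹ • ∑ ℓ ∈ mIdxLe M (N - mdeg κ), (A ℓ).mulVec (Uamp (ℓ + κ) t) := calc
    _ = ∑ ℓ ∈ mIdxLe M N, (mfact κ : ℝ)⁻¹ •
          if mdeg (κ + ℓ) ≤ N then (A ℓ).mulVec (Uamp (κ + ℓ) t) else 0 := by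
      simp only [pder_genPoly, Matrix.mulVec_smul, apply_ite (Matrix.mulVec _),
        Matrix.mulVec_zero]
    _ = _ := by
      rw [← Finset.smul_sum, ← Finset.sum_filter, mIdxLe_filter_mdeg_add_le hκ]
      simp only [add_comm κ]
  rw [hcoeff, hrhs]
  exact (hode κ hκ t).const_smul _
end
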